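/- The class F of finite fans with epimorphisms has the joint projection property and the amalgamation property: (JPP) for any finite fans A, B there exist a finite fan C and epimorphisms from C onto A and from C onto B; (AP) for any finite fans A, B₁, B₂ and epimorphisms φ₁: B₁ → A and φ₂: B₂ → A, there exist a finite fan C and epimorphisms ψ₁: C → B₁ and ψ₂: C → B₂ such that φ₁ ∘ ψ₁ = φ₂ ∘ ψ₂. -/

import Mathlib

/-- A finite fan: a finite poset with a least element (the root) such that the
set of predecessors of any element is linearly ordered, and the set of successors
of any non-root element is linearly ordered. -/
structure FiniteFan where
  carrier : Type
  fintype : Fintype carrier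
  ord : PartialOrder carrier
  root : carrier
  root_le : ∀ a : carrier, ord.le root a
  down_chain : ∀ a x y : carrier, ord.le x a → ord.le y a → ord.le x y ∨ ord.le y x
  up_chain : ∀ a : carrier, a ≠ root →
    ∀ x y : carrier, ord.le a x → ord.le a y → ord.le x y ∨ ord.le y x

attribute [instance] FiniteFan.fintype

/-- `t` is an immediate successor of `s` in the fan `A`. -/
def FiniteFan.covby (A : FiniteFan) (s t : A.carrier) : Prop :=
  A.ord.lt s t ∧ ∀ p : A.carrier, A.ord.lt s p → ¬ A.ord.lt p t

/-- The relation `R^A` : `R^A(s,t)` iff `s = t` or `t` is an immediate successor of `s`. -/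
def FiniteFan.R (A : FiniteFan) (s t : A.carrier) : Prop :=
  s = t ∨ A.covby s t

/-- An epimorphism of finite fans: a surjection with `R^B(s,t) → R^A(φ s, φ t)`. -/
def FanEpi (B A : FiniteFan) (φ : B.carrier → A.carrier) : Prop :=
  Function.Surjective φ ∧ ∀ s t : B.carrier, B.R s t → A.R (φ s) (φ t)

/-- A downwards closed subset of a finite fan. -/
def FiniteFan.DownClosed (A : FiniteFan) (C : Set A.carrier) : Prop :=
  ∀ x y : A.carrier, A.ord.le x y → y ∈ C → x ∈ C

/-- A downwards closed maximal chain on a finite fan: a family of downwards closed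
subsets linearly ordered by inclusion, maximal among such families. -/
def DCMaxChain (A : FiniteFan) (𝒞 : Set (Set A.carrier)) : Prop :=
  (∀ C ∈ 𝒞, A.DownClosed C) ∧ IsChain (· ⊆ ·) 𝒞 ∧
  ∀ C : Set A.carrier, A.DownClosed C → IsChain (· ⊆ ·) (insert C 𝒞) → C ∈ 𝒞

/-- An epimorphism in the class `F_c`: a fan epimorphism mapping the chain onto the chain. -/
def FcEpi (B A : FiniteFan) (𝒞B : Set (Set B.carrier)) (𝒞A : Set (Set A.carrier))
    (φ : B.carrier → A.carrier) : Prop :=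
  FanEpi B A φ ∧ (Set.image φ) '' 𝒞B = 𝒞A

/-- A branch of a fan: a maximal linearly ordered subset. -/
def FiniteFan.IsBranch (A : FiniteFan) (b : Set A.carrier) : Prop :=
  IsChain A.ord.le b ∧ ∀ b' : Set A.carrier, IsChain A.ord.le b' → b ⊆ b' → b' = b

/-- The height of a finite fan: the maximal `n` such that some branch has `n+1` elements. -/
noncomputable def FiniteFan.height (A : FiniteFan) : ℕ :=
  sSup {n : ℕ | ∃ b : Set A.carrier, A.IsBranch b ∧ b.ncard = n + 1}

/-- The width of a finite fan: the number of its branches. -/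
noncomputable def FiniteFan.width (A : FiniteFan) : ℕ :=
  {b : Set A.carrier | A.IsBranch b}.ncard

/-- A chain on a finite fan is canonical if there is an enumeration `b₁,…,bₙ` of the
branches such that whenever `C` is in the chain and `C ∩ b_j ≠ ∅`, then `b_i ⊆ C`
for all `i < j`. -/
def Canonical (A : FiniteFan) (𝒞 : Set (Set A.carrier)) : Prop :=
  ∃ (n : ℕ) (b : Fin n → Set A.carrier),
    (∀ i, A.IsBranch (b i)) ∧ Function.Injective b ∧
    (∀ b' : Set A.carrier, A.IsBranch b' → ∃ i, b' = b i) ∧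
    ∀ C ∈ 𝒞, ∀ i j : Fin n, i < j → (C ∩ b j).Nonempty → b i ⊆ C

/-- Membership in the class `F_cc`: a downwards closed maximal chain which is canonical,
on a fan all of whose branches have the same height. -/
def Fcc (A : FiniteFan) (𝒞 : Set (Set A.carrier)) : Prop :=
  DCMaxChain A 𝒞 ∧ Canonical A 𝒞 ∧ ∃ k : ℕ, ∀ b : Set A.carrier, A.IsBranch b → b.ncard = k + 1

/-!
Given epimorphisms `φ₁ : B₁ → A` and `φ₂ : B₂ → A`, every point `(x, y)` of the fibre product
`φ₁ x = φ₂ y` is reached from `(root, root)` by simultaneous `R`-steps that stay in the fibre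
product. By induction: either `x` (or `y`) has a lower cover with the same image, and the other
coordinate stutters, or lower covers of `x` and `y` map to lower covers of `φ₁ x = φ₂ y`, which
coincide since the predecessors of a point of a fan form a chain. One chain per point of the fibre
product, laid along such a path and glued at the root, gives a fan (a comb) mapping onto `B₁` and
onto `B₂` compatibly over `A`. The joint projection property is amalgamation over the one-point
fan.
-/

open Relation

theorem Relation.ReflTransGen.exists_seq {α : Type*} {r : α → α → Prop} {a b : α}
    (h : ReflTransGen r a b) :
    ∃ (n : ℕ) (f : ℕ → α), f 0 = a ∧ f n = b ∧ ∀ i < n, r (f i) (f (i + 1)) := by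
  induction h with
  | refl => exact ⟨0, fun _ => a, rfl, rfl, fun i hi => absurd hi i.not_lt_zero⟩
  | @tail c d _ hcd ih =>
    obtain ⟨n, f, hf0, hfn, hf⟩ := ih
    refine ⟨n + 1, fun i => if i ≤ n then f i else d, by simp [hf0], by simp, fun i hi => ?_⟩
    rcases Nat.lt_succ_iff_lt_or_eq.1 hi with hi | rfl
    · simpa [hi.le, Nat.succ_le_of_lt hi] using hf i hi
    · simpa [hfn] using hcd

theorem Sigma.covBy_of_mk_covBy_mk {ι : Type*} {α : ι → Type*} [∀ i, Preorder (α i)] {i : ι}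
    {a b : α i} (h : (⟨i, a⟩ : Σ i, α i) ⋖ ⟨i, b⟩) : a ⋖ b :=
  ⟨Sigma.mk_lt_mk_iff.1 h.1, fun _ hac hcb => h.2 (Sigma.mk_lt_mk_iff.2 hac)
    (Sigma.mk_lt_mk_iff.2 hcb)⟩

theorem Sigma.le_total_of_fst_eq {ι : Type*} {α : ι → Type*} [∀ i, LinearOrder (α i)]
    {p q : Σ i, α i} (h : p.1 = q.1) : p ≤ q ∨ q ≤ p := by
  obtain ⟨i, a⟩ := p
  obtain ⟨j, b⟩ := q
  obtain rfl : i = j := h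
  exact (le_total a b).imp Sigma.mk_le_mk_iff.2 Sigma.mk_le_mk_iff.2

namespace FiniteFan

instance instPartialOrder (A : FiniteFan) : PartialOrder A.carrier := A.ord

variable {A : FiniteFan}

theorem covby_iff_covBy {s t : A.carrier} : A.covby s t ↔ s ⋖ t := Iff.rfl

theorem R.le {s t : A.carrier} (h : A.R s t) : s ≤ t := by
  rcases h with rfl | h
  exacts [le_rfl, (covby_iff_covBy.1 h).le]

theorem not_covBy_root (a : A.carrier) : ¬ a ⋖ A.root :=
  fun h => (A.root_le a : A.root ≤ a).not_gt h.lt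

theorem exists_covBy_of_ne_root {x : A.carrier} (hx : x ≠ A.root) : ∃ x', x' ⋖ x :=
  exists_covBy_of_wellFoundedGT fun hmin => hx (hmin.eq_of_le (A.root_le x : A.root ≤ x)).symm

theorem eq_of_covBy_of_covBy {a b c : A.carrier} (ha : a ⋖ c) (hb : b ⋖ c) : a = b := by
  rcases A.down_chain c a b ha.le hb.le with hab | hba
  · exact ((ha.wcovBy.eq_or_eq hab hb.le).resolve_right hb.ne).symm
  · exact (hb.wcovBy.eq_or_eq hba ha.le).resolve_right ha.ne

def point : FiniteFan where
  carrier := Unit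
  fintype := inferInstance
  ord := inferInstance
  root := ()
  root_le _ := le_rfl
  down_chain _ _ _ _ _ := Or.inl le_rfl
  up_chain _ _ _ _ _ _ := Or.inl le_rfl

end FiniteFan

namespace FanEpi

variable {A B : FiniteFan} {φ : B.carrier → A.carrier}

theorem monotone (h : FanEpi B A φ) : Monotone φ := by
  classical
  let := Fintype.toLocallyFiniteOrder (α := B.carrier)
  exact (monotone_iff_forall_covBy φ).2 fun x y hxy => (h.2 x y (Or.inr hxy)).le

theorem map_root (h : FanEpi B A φ) : φ B.root = A.root := by
  obtain ⟨b, hb⟩ := h.1 A.root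
  exact (hb ▸ h.monotone (B.root_le b : B.root ≤ b)).antisymm (A.root_le _)

theorem exists_covBy_map_covBy (h : FanEpi B A φ) {x : B.carrier} (hx : x ≠ B.root)
    (hstutter : ∀ x', x' ⋖ x → φ x' ≠ φ x) : ∃ x', x' ⋖ x ∧ φ x' ⋖ φ x := by
  obtain ⟨x', hx'⟩ := B.exists_covBy_of_ne_root hx
  exact ⟨x', hx', (h.2 x' x (Or.inr hx')).resolve_left (hstutter x' hx')⟩

theorem toPoint (B : FiniteFan) : FanEpi B FiniteFan.point fun _ => () :=
  ⟨fun _ => ⟨B.root, rfl⟩, fun _ _ _ => Or.inl rfl⟩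

end FanEpi

section Comb

variable {S : Type}

def comb [Fintype S] (α : S → Type) [∀ s, Fintype (α s)] [∀ s, LinearOrder (α s)] :
    FiniteFan where
  carrier := WithBot (Σ s, α s)
  fintype := inferInstanceAs (Fintype (Option _))
  ord := inferInstance
  root := ⊥
  root_le _ := bot_le
  down_chain a x y hx hy := by
    induction x using WithBot.recBotCoe with
    | bot => exact Or.inl bot_le
    | coe p =>
    induction y using WithBot.recBotCoe with
    | bot => exact Or.inr bot_le
    | coe q =>
    induction a using WithBot.recBotCoe with
    | bot => exact absurd hx (WithBot.not_coe_le_bot p)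
    | coe c =>
    simp only [WithBot.coe_le_coe] at hx hy ⊢
    exact Sigma.le_total_of_fst_eq ((Sigma.le_def.1 hx).1.trans (Sigma.le_def.1 hy).1.symm)
  up_chain a ha x y hx hy := by
    induction a using WithBot.recBotCoe with
    | bot => exact absurd rfl ha
    | coe c =>
    induction x using WithBot.recBotCoe with
    | bot => exact absurd hx (WithBot.not_coe_le_bot c)
    | coe p =>
    induction y using WithBot.recBotCoe with
    | bot => exact absurd hy (WithBot.not_coe_le_bot c)
    | coe q =>
    simp only [WithBot.coe_le_coe] at hx hy ⊢
    exact Sigma.le_total_of_fst_eq ((Sigma.le_def.1 hx).1.symm.trans (Sigma.le_def.1 hy).1)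

variable {n : S → ℕ}

theorem comb_bot_covBy {s : S} {i : Fin (n s)}
    (h : (⊥ : WithBot (Σ s, Fin (n s))) ⋖ ↑(⟨s, i⟩ : Σ s, Fin (n s))) : (i : ℕ) = 0 := by
  have h0 : (⟨0, i.pos⟩ : Fin (n s)) ≤ i := Nat.zero_le _
  exact Nat.le_zero.1 (Sigma.mk_le_mk_iff.1 (WithBot.bot_covBy_coe.1 h (Sigma.mk_le_mk_iff.2 h0)))

theorem comb_coe_covBy {s t : S} {i : Fin (n s)} {j : Fin (n t)}
    (h : ((⟨s, i⟩ : Σ s, Fin (n s)) : WithBot (Σ s, Fin (n s))) ⋖ ↑(⟨t, j⟩ : Σ s, Fin (n s))) :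
    s = t ∧ (j : ℕ) = i + 1 := by
  rw [WithBot.coe_covBy_coe] at h
  obtain rfl : s = t := (Sigma.lt_def.1 h.1).1
  have hij : i ⋖ j := Sigma.covBy_of_mk_covBy_mk (α := fun s => Fin (n s)) h
  exact ⟨rfl, (Nat.covBy_iff_add_one_eq.1 (Fin.covBy_iff.1 hij)).symm⟩

/-- The root stands for `w s 0`, so the point `i` of the chain `s` goes to `w s (i + 1)`. -/
def combMap {β : Type*} (r : β) (w : S → ℕ → β) : WithBot (Σ s, Fin (n s)) → β :=
  WithBot.recBotCoe r fun p => w p.1 (p.2 + 1)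

theorem fanEpi_combMap [Fintype S] (B : FiniteFan) (w : S → ℕ → B.carrier)
    (hw₀ : ∀ s, w s 0 = B.root) (hw : ∀ s, ∀ i < n s, B.R (w s i) (w s (i + 1)))
    (hsurj : ∀ b, ∃ s, w s (n s) = b) :
    FanEpi (comb fun s => Fin (n s)) B (combMap B.root w) := by
  refine ⟨fun b => ?_, fun c d hcd => ?_⟩
  · obtain ⟨s, rfl⟩ := hsurj b
    rcases Nat.eq_zero_or_pos (n s) with hs | hs
    · exact ⟨(⊥ : WithBot (Σ s, Fin (n s))), by simp [combMap, hs, hw₀]⟩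
    · exact ⟨((⟨s, ⟨n s - 1, Nat.sub_lt hs one_pos⟩⟩ : Σ s, Fin (n s)) : WithBot _),
        by simp [combMap, Nat.sub_one_add_one hs.ne']⟩
  rcases hcd with rfl | hcd
  · exact Or.inl rfl
  rw [FiniteFan.covby_iff_covBy] at hcd
  induction c using WithBot.recBotCoe with
  | bot =>
    induction d using WithBot.recBotCoe with
    | bot => exact absurd hcd.lt (lt_irrefl _)
    | coe q =>
      obtain ⟨s, i⟩ := q
      have hi := comb_bot_covBy hcd
      simpa [combMap, hi, hw₀] using hw s 0 (hi ▸ i.pos)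
  | coe p =>
    induction d using WithBot.recBotCoe with
    | bot => exact absurd hcd.lt (WithBot.not_lt_bot _)
    | coe q =>
      obtain ⟨s, i⟩ := p
      obtain ⟨t, j⟩ := q
      obtain ⟨rfl, hj⟩ := comb_coe_covBy hcd
      simpa [combMap, hj] using hw s (i + 1) (hj ▸ j.isLt)

end Comb

section Amalgamation

variable {A B₁ B₂ : FiniteFan} {φ₁ : B₁.carrier → A.carrier} {φ₂ : B₂.carrier → A.carrier}

def SyncStep (φ₁ : B₁.carrier → A.carrier) (φ₂ : B₂.carrier → A.carrier)
    (p q : B₁.carrier × B₂.carrier) : Prop :=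
  B₁.R p.1 q.1 ∧ B₂.R p.2 q.2 ∧ φ₁ q.1 = φ₂ q.2

theorem reflTransGen_syncStep (h₁ : FanEpi B₁ A φ₁) (h₂ : FanEpi B₂ A φ₂)
    (p : B₁.carrier × B₂.carrier) (hp : φ₁ p.1 = φ₂ p.2) :
    ReflTransGen (SyncStep φ₁ φ₂) (B₁.root, B₂.root) p := by
  induction p using WellFoundedLT.induction with
  | _ p ih =>
  obtain ⟨x, y⟩ := p
  dsimp only at hp
  have step : ∀ x' y', B₁.R x' x → B₂.R y' y → (x', y') < (x, y) → φ₁ x' = φ₂ y' →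
      ReflTransGen (SyncStep φ₁ φ₂) (B₁.root, B₂.root) (x, y) :=
    fun x' y' hx hy hlt h => (ih _ hlt h).tail ⟨hx, hy, hp⟩
  by_cases hx : ∃ x', x' ⋖ x ∧ φ₁ x' = φ₁ x
  · obtain ⟨x', hx', hφ⟩ := hx
    exact step x' y (.inr hx') (.inl rfl) (Prod.mk_lt_mk_of_lt_of_le hx'.lt le_rfl) (hφ ▸ hp)
  by_cases hy : ∃ y', y' ⋖ y ∧ φ₂ y' = φ₂ y
  · obtain ⟨y', hy', hφ⟩ := hy
    exact step x y' (.inl rfl) (.inr hy') (Prod.mk_lt_mk_of_le_of_lt le_rfl hy'.lt) (hφ ▸ hp)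
  push Not at hx hy
  rcases eq_or_ne x B₁.root with rfl | hx₀
  · obtain rfl : y = B₂.root := by
      by_contra hy₀
      obtain ⟨y', -, hφ⟩ := h₂.exists_covBy_map_covBy hy₀ hy
      rw [← hp, h₁.map_root] at hφ
      exact A.not_covBy_root _ hφ
    exact .refl
  obtain ⟨x', hx', hφx⟩ := h₁.exists_covBy_map_covBy hx₀ hx
  have hy₀ : y ≠ B₂.root := by
    rintro rfl
    rw [hp, h₂.map_root] at hφx
    exact A.not_covBy_root _ hφx
  obtain ⟨y', hy', hφy⟩ := h₂.exists_covBy_map_covBy hy₀ hy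
  exact step x' y' (.inr hx') (.inr hy') (Prod.mk_lt_mk_of_lt_of_le hx'.lt hy'.le)
    (A.eq_of_covBy_of_covBy hφx (hp ▸ hφy))

theorem FanEpi.exists_amalgamation (h₁ : FanEpi B₁ A φ₁) (h₂ : FanEpi B₂ A φ₂) :
    ∃ (C : FiniteFan) (ψ₁ : C.carrier → B₁.carrier) (ψ₂ : C.carrier → B₂.carrier),
      FanEpi C B₁ ψ₁ ∧ FanEpi C B₂ ψ₂ ∧ φ₁ ∘ ψ₁ = φ₂ ∘ ψ₂ := by
  classical
  choose n f hf₀ hfn hf using fun p : {p : B₁.carrier × B₂.carrier // φ₁ p.1 = φ₂ p.2} =>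
    (reflTransGen_syncStep h₁ h₂ p.1 p.2).exists_seq
  refine ⟨comb fun p => Fin (n p), combMap B₁.root fun p i => (f p i).1,
    combMap B₂.root fun p i => (f p i).2, ?_, ?_, ?_⟩
  · refine fanEpi_combMap B₁ _ (fun p => by rw [hf₀]) (fun p i hi => (hf p i hi).1) fun x => ?_
    obtain ⟨y, hy⟩ := h₂.1 (φ₁ x)
    exact ⟨⟨(x, y), hy.symm⟩, by rw [hfn]⟩
  · refine fanEpi_combMap B₂ _ (fun p => by rw [hf₀]) (fun p i hi => (hf p i hi).2.1) fun y => ?_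
    obtain ⟨x, hx⟩ := h₁.1 (φ₂ y)
    exact ⟨⟨(x, y), hx⟩, by rw [hfn]⟩
  · funext c
    induction c using WithBot.recBotCoe with
    | bot => exact h₁.map_root.trans h₂.map_root.symm
    | coe p => exact (hf p.1 p.2 p.2.isLt).2.2

end Amalgamation

/-- The class of finite fans with epimorphisms has the JPP and the AP. -/
theorem stmt_5 :
    (∀ A B : FiniteFan,
      ∃ (C : FiniteFan) (φ : C.carrier → A.carrier) (ψ : C.carrier → B.carrier),
        FanEpi C A φ ∧ FanEpi C B ψ) ∧
    (∀ (A B₁ B₂ : FiniteFan) (φ₁ : B₁.carrier → A.carrier) (φ₂ : B₂.carrier → A.carrier),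
      FanEpi B₁ A φ₁ → FanEpi B₂ A φ₂ →
      ∃ (C : FiniteFan) (ψ₁ : C.carrier → B₁.carrier) (ψ₂ : C.carrier → B₂.carrier),
        FanEpi C B₁ ψ₁ ∧ FanEpi C B₂ ψ₂ ∧ φ₁ ∘ ψ₁ = φ₂ ∘ ψ₂) := by
  refine ⟨fun A B => ?_, fun _ _ _ _ _ h₁ h₂ => h₁.exists_amalgamation h₂⟩
  obtain ⟨C, φ, ψ, hφ, hψ, -⟩ := (FanEpi.toPoint A).exists_amalgamation (FanEpi.toPoint B)
  exact ⟨C, φ, ψ, hφ, hψ⟩
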